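/- For all real numbers M > 0, D > 0 and λ ≥ 0, the integral (1/(2π)) ∫_{-∞}^{∞} ω² / ((λ − Mω²)² + D²ω²) dω equals 1/(2DM). (This is the squared H₂ norm of each frequency-output mode, independent of the mode eigenvalue λ.) -/

import Mathlib

/-!
Writing `c = λ / M`, the integrand equals `(M² (ω - c/ω)² + D²)⁻¹` for `ω ≠ 0`. Glasser's master
theorem `∫ g (x - c/x) dx = ∫ g` (`c ≥ 0`) then reduces the integral to the Lorentzian integral
`∫ (M² u² + D²)⁻¹ du = π / (M D)`. For `c > 0`, `x ↦ x - c/x` maps `(0, ∞)` bijectively onto `ℝ`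
with derivative `1 + c/x²`, and the involution `x ↦ -c/x` exchanges the two half-lines, preserves
`x - c/x` and has Jacobian `c/x²`; so the integral over `(-∞, 0)` supplies the missing weight
`c/x²`.
-/

open MeasureTheory Set Real

theorem inv_sq_mul_sq_add_sq_eq {a b : ℝ} (hb : b ≠ 0) (u : ℝ) :
    (a ^ 2 * u ^ 2 + b ^ 2)⁻¹ = (b ^ 2)⁻¹ * (1 + (a / b * u) ^ 2)⁻¹ := by
  field_simp
  ring

theorem integrable_inv_sq_mul_sq_add_sq {a b : ℝ} (ha : a ≠ 0) (hb : b ≠ 0) :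
    Integrable fun u : ℝ => (a ^ 2 * u ^ 2 + b ^ 2)⁻¹ := by
  simp_rw [inv_sq_mul_sq_add_sq_eq hb]
  exact (integrable_inv_one_add_sq.comp_mul_left' (div_ne_zero ha hb)).const_mul _

theorem integral_inv_sq_mul_sq_add_sq {a b : ℝ} (ha : 0 < a) (hb : 0 < b) :
    ∫ u : ℝ, (a ^ 2 * u ^ 2 + b ^ 2)⁻¹ = π / (a * b) := by
  simp_rw [inv_sq_mul_sq_add_sq_eq hb.ne']
  rw [integral_const_mul, Measure.integral_comp_mul_left (fun x : ℝ => (1 + x ^ 2)⁻¹),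
    integral_univ_inv_one_add_sq, abs_of_pos (by positivity), smul_eq_mul]
  field_simp

theorem Integrable.of_smul_of_one_le {α F : Type*} [MeasurableSpace α] {μ : Measure α}
    [NormedAddCommGroup F] [NormedSpace ℝ F] {f : α → F} {w : α → ℝ}
    (hw : AEStronglyMeasurable w μ) (hw_ge : ∀ a, 1 ≤ w a)
    (h : Integrable (fun a => w a • f a) μ) : Integrable f μ := by
  have hw_inv : ∀ a, ‖(w a)⁻¹‖ ≤ 1 := fun a => by
    rw [norm_inv, Real.norm_of_nonneg (zero_le_one.trans (hw_ge a))]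
    exact inv_le_one_of_one_le₀ (hw_ge a)
  convert h.bdd_smul 1 hw.inv₀ (.of_forall hw_inv) using 1
  funext a
  simp [smul_smul, inv_mul_cancel₀ (zero_lt_one.trans_le (hw_ge a)).ne']

section Glasser

variable {F : Type*} [NormedAddCommGroup F] [NormedSpace ℝ F] {c : ℝ}

theorem strictMonoOn_sub_div_Ioi (hc : 0 ≤ c) :
    StrictMonoOn (fun x : ℝ => x - c / x) (Ioi 0) :=
  fun x hx y _ hxy => by
    dsimp only
    linarith [div_le_div_of_nonneg_left hc hx hxy.le]

theorem image_Ioi_sub_div (hc : 0 < c) : (fun x : ℝ => x - c / x) '' Ioi 0 = univ := by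
  refine eq_univ_of_forall fun u => ?_
  set r := √(u ^ 2 + 4 * c)
  have hr : r ^ 2 = u ^ 2 + 4 * c := sq_sqrt (by positivity)
  have hu : |u| < r := by
    rw [← sqrt_sq_eq_abs]
    exact sqrt_lt_sqrt (sq_nonneg u) (by linarith)
  have hx : 0 < u + r := by linarith [neg_abs_le u]
  -- the positive root of `x² - u x - c = 0`
  refine ⟨(u + r) / 2, half_pos hx, ?_⟩
  field_simp
  linear_combination hr

theorem image_Ioi_neg_div (hc : 0 < c) : (fun x : ℝ => -c / x) '' Ioi 0 = Iio 0 := by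
  ext y
  constructor
  · rintro ⟨x, hx, rfl⟩
    exact div_neg_of_neg_of_pos (neg_neg_of_pos hc) hx
  · intro hy
    refine ⟨-c / y, div_pos_of_neg_of_neg (neg_neg_of_pos hc) hy, ?_⟩
    field_simp [hc.ne', (mem_Iio.1 hy).ne]

theorem hasDerivAt_sub_div {x : ℝ} (hx : x ≠ 0) :
    HasDerivAt (fun x : ℝ => x - c / x) (1 + c / x ^ 2) x := by
  simpa only [div_eq_mul_inv, mul_neg, sub_neg_eq_add, Pi.sub_def] using
    (hasDerivAt_id' x).sub ((hasDerivAt_inv hx).const_mul c)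

theorem hasDerivAt_neg_div {x : ℝ} (hx : x ≠ 0) :
    HasDerivAt (fun x : ℝ => -c / x) (c / x ^ 2) x := by
  simpa only [div_eq_mul_inv, neg_mul_neg] using (hasDerivAt_inv hx).const_mul (-c)

theorem neg_div_sub_div_neg_div {x : ℝ} (hc : c ≠ 0) (hx : x ≠ 0) :
    -c / x - c / (-c / x) = x - c / x := by
  field_simp
  ring

theorem neg_div_injective (hc : c ≠ 0) : Function.Injective fun x : ℝ => -c / x :=
  fun x y h => by simpa [div_eq_mul_inv, hc] using h

variable (g : ℝ → F)

theorem integral_Ioi_deriv_smul_comp_sub_div (hc : 0 < c) :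
    ∫ x in Ioi 0, (1 + c / x ^ 2) • g (x - c / x) = ∫ u, g u := by
  symm
  rw [← setIntegral_univ, ← image_Ioi_sub_div hc, integral_image_eq_integral_abs_deriv_smul
    measurableSet_Ioi (fun x hx => (hasDerivAt_sub_div (mem_Ioi.1 hx).ne').hasDerivWithinAt)
    (strictMonoOn_sub_div_Ioi hc.le).injOn g]
  refine setIntegral_congr_fun measurableSet_Ioi fun x _ => ?_
  rw [abs_of_pos (by positivity)]

theorem integrableOn_Ioi_deriv_smul_comp_sub_div_iff (hc : 0 < c) :
    IntegrableOn (fun x => (1 + c / x ^ 2) • g (x - c / x)) (Ioi 0) ↔ Integrable g := by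
  symm
  rw [← integrableOn_univ, ← image_Ioi_sub_div hc,
    integrableOn_image_iff_integrableOn_abs_deriv_smul measurableSet_Ioi
    (fun x hx => (hasDerivAt_sub_div (mem_Ioi.1 hx).ne').hasDerivWithinAt)
    (strictMonoOn_sub_div_Ioi hc.le).injOn g]
  refine integrableOn_congr_fun (fun x _ => ?_) measurableSet_Ioi
  rw [abs_of_pos (by positivity)]

theorem integral_Iio_comp_sub_div (hc : 0 < c) :
    ∫ x in Iio 0, g (x - c / x) = ∫ x in Ioi 0, (c / x ^ 2) • g (x - c / x) := by
  rw [← image_Ioi_neg_div hc, integral_image_eq_integral_abs_deriv_smul measurableSet_Ioi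
    (fun x hx => (hasDerivAt_neg_div (mem_Ioi.1 hx).ne').hasDerivWithinAt)
    (neg_div_injective hc.ne').injOn]
  refine setIntegral_congr_fun measurableSet_Ioi fun x (hx : 0 < x) => ?_
  rw [abs_of_pos (by positivity), neg_div_sub_div_neg_div hc.ne' hx.ne']

theorem integrableOn_Iio_comp_sub_div_iff (hc : 0 < c) :
    IntegrableOn (fun x => g (x - c / x)) (Iio 0) ↔
      IntegrableOn (fun x => (c / x ^ 2) • g (x - c / x)) (Ioi 0) := by
  rw [← image_Ioi_neg_div hc,
    integrableOn_image_iff_integrableOn_abs_deriv_smul measurableSet_Ioi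
    (fun x hx => (hasDerivAt_neg_div (mem_Ioi.1 hx).ne').hasDerivWithinAt)
    (neg_div_injective hc.ne').injOn]
  refine integrableOn_congr_fun (fun x (hx : 0 < x) => ?_) measurableSet_Ioi
  rw [abs_of_pos (by positivity), neg_div_sub_div_neg_div hc.ne' hx.ne']

theorem integral_comp_sub_div (hc : 0 ≤ c) (hg : Integrable g) :
    ∫ x, g (x - c / x) = ∫ u, g u := by
  rcases hc.eq_or_lt with rfl | hc
  · simp
  have hweighted := (integrableOn_Ioi_deriv_smul_comp_sub_div_iff g hc).2 hg
  have hweight : Measurable fun x : ℝ => 1 + c / x ^ 2 := by fun_prop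
  have hIoi : IntegrableOn (fun x => g (x - c / x)) (Ioi 0) :=
    Integrable.of_smul_of_one_le hweight.aestronglyMeasurable
      (fun x => le_add_of_nonneg_right (by positivity)) hweighted
  have hjacobian : IntegrableOn (fun x => (c / x ^ 2) • g (x - c / x)) (Ioi 0) := by
    simpa only [add_smul, one_smul, Pi.sub_def, add_sub_cancel_left] using hweighted.sub hIoi
  have hIic : IntegrableOn (fun x => g (x - c / x)) (Iic 0) :=
    ((integrableOn_Iio_comp_sub_div_iff g hc).2 hjacobian).congr_set_ae Iio_ae_eq_Iic.symm
  calc ∫ x, g (x - c / x)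
      = (∫ x in Iio 0, g (x - c / x)) + ∫ x in Ioi 0, g (x - c / x) := by
        rw [← intervalIntegral.integral_Iic_add_Ioi hIic hIoi, integral_Iic_eq_integral_Iio]
    _ = ∫ x in Ioi 0, (1 + c / x ^ 2) • g (x - c / x) := by
        rw [integral_Iio_comp_sub_div g hc, ← integral_add hjacobian hIoi]
        simp only [add_smul, one_smul, add_comm]
    _ = ∫ u, g u := integral_Ioi_deriv_smul_comp_sub_div g hc

end Glasser

theorem frequency_mode_integrand_eq {M D lam ω : ℝ} (hM : M ≠ 0) (hD : D ≠ 0) (hω : ω ≠ 0) :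
    ω ^ 2 / ((lam - M * ω ^ 2) ^ 2 + D ^ 2 * ω ^ 2) =
      (M ^ 2 * (ω - lam / M / ω) ^ 2 + D ^ 2)⁻¹ := by
  have : 0 < (lam - M * ω ^ 2) ^ 2 + D ^ 2 * ω ^ 2 := by positivity
  field_simp
  ring

/-- The squared H₂ norm of each frequency-output mode
`G̃(s) = s/(Ms² + Ds + λ)`:
`(1/(2π)) ∫_{-∞}^{∞} ω² / ((λ − Mω²)² + D²ω²) dω = 1/(2DM)`,
independent of the mode eigenvalue `λ ≥ 0`. -/
theorem frequency_mode_H2_norm_sq (M D lam : ℝ) (hM : 0 < M) (hD : 0 < D)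
    (hlam : 0 ≤ lam) :
    (1 / (2 * Real.pi)) *
        (∫ ω : ℝ, ω ^ 2 / ((lam - M * ω ^ 2) ^ 2 + D ^ 2 * ω ^ 2)) =
      1 / (2 * D * M) := by
  have hintegrand : (fun ω : ℝ => ω ^ 2 / ((lam - M * ω ^ 2) ^ 2 + D ^ 2 * ω ^ 2)) =ᵐ[volume]
      fun ω => (M ^ 2 * (ω - lam / M / ω) ^ 2 + D ^ 2)⁻¹ := by
    filter_upwards [volume.ae_ne 0] with ω hω using frequency_mode_integrand_eq hM.ne' hD.ne' hω
  rw [integral_congr_ae hintegrand,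
    integral_comp_sub_div (fun u => (M ^ 2 * u ^ 2 + D ^ 2)⁻¹) (div_nonneg hlam hM.le)
      (integrable_inv_sq_mul_sq_add_sq hM.ne' hD.ne'),
    integral_inv_sq_mul_sq_add_sq hM hD]
  field_simp
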